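/- For all integers α, β, γ ≥ 0, the formal power series ∑_{n≥0} p̄_{-5}(8·3^{2α}·5^{2β+1}·7^{2γ}·n + 2·3^{2α}·5^{2β+1}·7^{2γ}) q^n is congruent to 4·q·f₅⁶ modulo 8, i.e., for every n ≥ 0 the coefficient of q^n on the two sides are congruent modulo 8. -/

import Mathlib

/-- The number of `t`-colored overpartitions of `n`, i.e. the `n`-th coefficient of the
formal power series `∏_{k≥1} (1-q^{2k})^t / (1-q^k)^{2t}` over `ℤ`.  Since every factor
with index `k > n` is `≡ 1 (mod q^{n+1})`, the `n`-th coefficient of the infinite product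
equals the `n`-th coefficient of the product over `1 ≤ k ≤ n`, which is used here. -/
noncomputable def pbar (t n : ℕ) : ℤ :=
  PowerSeries.coeff (R := ℤ) n
    ((∏ k ∈ Finset.Icc 1 n, (1 - PowerSeries.X ^ (2 * k)) ^ t) *
      PowerSeries.invOfUnit (∏ k ∈ Finset.Icc 1 n, (1 - PowerSeries.X ^ k) ^ (2 * t)) 1)

/-- Truncation of the formal power series `f_m = ∏_{k≥1} (1 - q^{mk})` over `ℤ` to the
factors with `1 ≤ k ≤ n`.  For `m ≥ 1` every omitted factor is `≡ 1 (mod q^{n+1})`, so any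
coefficient of index `≤ n` of (any fixed power of) `f_m` agrees with the corresponding
coefficient of (that power of) `ftrunc m n`. -/
noncomputable def ftrunc (m n : ℕ) : PowerSeries ℤ :=
  ∏ k ∈ Finset.Icc 1 n, (1 - PowerSeries.X ^ (m * k))

open Finset

variable {R : Type*} [CommRing R]

/-- Gaussian binomial coefficient in variable `y`, defined by the q-Pascal recurrence. -/
def gb (y : R) : ℕ → ℕ → R
  | _, 0 => 1
  | 0, _+1 => 0
  | m+1, k+1 => gb y m (k+1) + y^(m-k) * gb y m k

lemma gb_zero (y : R) : ∀ {m k : ℕ}, m < k → gb y m k = 0 := by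
  intro m
  induction m with
  | zero => intro k hk; match k, hk with
    | k+1, _ => rfl
  | succ m ih =>
    intro k hk
    match k, hk with
    | k+1, hk =>
      show gb y m (k+1) + y^(m-k) * gb y m k = 0
      rw [ih (by omega), ih (by omega), mul_zero, add_zero]

lemma gb_self (y : R) : ∀ m : ℕ, gb y m m = 1 := by
  intro m
  induction m with
  | zero => rfl
  | succ m ih =>
    show gb y m (m+1) + y^(m-m) * gb y m m = 1
    rw [gb_zero y (by omega), ih, Nat.sub_self, pow_zero, one_mul, zero_add]

lemma gb_pascalB (y : R) : ∀ (m k : ℕ), gb y (m+1) (k+1) = y^(k+1) * gb y m (k+1) + gb y m k := by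
  intro m
  induction m with
  | zero =>
    intro k
    match k with
    | 0 => show gb y 0 1 + y^0 * gb y 0 0 = _ ; simp [gb]
    | k+1 => show gb y 0 (k+2) + y^(0-(k+1)) * gb y 0 (k+1) = _ ; simp [gb]
  | succ m ih =>
    intro k
    match k with
    | 0 =>
      have h0 : ∀ j, gb y j 0 = (1:R) := fun j => by cases j <;> rfl
      show gb y (m+1) 1 + y^(m+1-0) * gb y (m+1) 0 = y^1 * gb y (m+1) 1 + gb y (m+1) 0
      have h1 : gb y (m+1) 1 = gb y m 1 + y^(m-0) * gb y m 0 := rfl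
      rw [h0] at h1
      have h4 := ih 0
      rw [h0] at h4
      rw [h0, Nat.sub_zero] at *
      linear_combination (-y) * h1 + h4
    | k+1 =>
      have hdef : gb y (m+1+1) (k+1+1) = gb y (m+1) (k+2) + y^(m-k) * gb y (m+1) (k+1) := by
        show gb y (m+1) (k+2) + y^(m+1-(k+1)) * gb y (m+1) (k+1) = _
        rw [Nat.succ_sub_succ]
      by_cases hk : k + 1 ≤ m
      · have hc : y^(m-k) = y^(m-(k+1)) * y := by
          rw [← pow_succ]; congr 1; omega
        have h1 : gb y (m+1) (k+2) = gb y m (k+2) + y^(m-(k+1)) * gb y m (k+1) := by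
          show gb y (m+1) (k+2) = gb y m (k+2) + y^(m-(k+1)) * gb y m (k+1)
          rfl
        have h2 : gb y (m+1) (k+1) = gb y m (k+1) + y^(m-(k+1)) * y * gb y m k := by
          show gb y m (k+1) + y^(m-k) * gb y m k = _
          rw [hc]
        have h3 := ih (k+1)
        have h4 := ih k
        have h0 : gb y (m+1+1) (k+1+1)
            = gb y (m+1) (k+2) + y^(m-(k+1)) * y * gb y (m+1) (k+1) := by
          rw [hdef, hc]
        linear_combination h0 - y^(k+2) * h1 + h3 - h2 + y^(m-(k+1)) * y * h4
      · have hA : gb y (m+1) (k+2) = 0 := gb_zero y (by omega)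
        have hmk : m - k = 0 := by omega
        rw [hdef, hA, hmk, pow_zero, one_mul, zero_add]
        have hA2 : gb y (m+1+1) ((k+1)+1+1) = 0 := gb_zero y (by omega)
        -- goal : gb y (m+1) (k+1) = y^(k+2) * 0 + gb y (m+1) (k+1)
        ring

lemma gb_one (y : R) : ∀ m, gb y m 0 = 1 := fun m => by cases m <;> rfl

lemma gb_prod (y : R) : ∀ (m k : ℕ), k ≤ m →
    gb y m k * ∏ i ∈ range k, (1 - y^(i+1)) = ∏ i ∈ range k, (1 - y^(m - k + (i+1))) := by
  intro m
  induction m with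
  | zero =>
    intro k hk
    interval_cases k
    simp [gb_one]
  | succ m ih =>
    intro k hk
    match k with
    | 0 => simp [gb_one]
    | k+1 =>
      by_cases hkm : k + 1 ≤ m
      · have hd : gb y (m+1) (k+1) = gb y m (k+1) + y^(m-k) * gb y m k := rfl
        have ih1 := ih (k+1) hkm
        have ih2 := ih k (by omega)
        have hih1 : gb y m (k+1) * ∏ i ∈ range (k+1), (1 - y^(i+1))
            = (1 - y^(m-k)) * ∏ i ∈ range k, (1 - y^(m - k + (i+1))) := by
          rw [ih1, Finset.prod_range_succ']
          have h5 : (∏ i ∈ range k, (1 - y ^ (m - (k+1) + (i+1+1))))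
              = ∏ i ∈ range k, (1 - y^(m-k+(i+1))) :=
            Finset.prod_congr rfl (fun i _ => by
              rw [show m - (k+1) + (i+1+1) = m-k+(i+1) from by omega])
          rw [h5, show m - (k+1) + (0+1) = m - k from by omega]
          ring
        have htop : (∏ i ∈ range (k+1), (1 - y^(m + 1 - (k+1) + (i+1))))
            = (∏ i ∈ range k, (1 - y^(m - k + (i+1)))) * (1 - y^(m+1)) := by
          rw [Finset.prod_range_succ]
          have h5 : (∏ i ∈ range k, (1 - y ^ (m + 1 - (k+1) + (i+1))))
              = ∏ i ∈ range k, (1 - y^(m-k+(i+1))) :=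
            Finset.prod_congr rfl (fun i _ => by
              rw [show m + 1 - (k+1) + (i+1) = m-k+(i+1) from by omega])
          rw [h5, show m + 1 - (k+1) + (k+1) = m+1 from by omega]
        rw [hd, add_mul, hih1, htop, Finset.prod_range_succ]
        have e3 : y^(m-k) * y^(k+1) = y^(m+1) := by
          rw [← pow_add]; congr 1; omega
        linear_combination y^(m-k)*(1 - y^(k+1))*ih2
          - (∏ i ∈ range k, (1 - y^(m - k + (i+1)))) * e3
      · have hk' : k = m := by omega
        subst hk'
        rw [gb_self]
        have h5 : (∏ i ∈ range (k+1), (1 - y ^ (k + 1 - (k+1) + (i+1))))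
            = ∏ i ∈ range (k+1), (1 - y^(i+1)) :=
          Finset.prod_congr rfl (fun i _ => by
            rw [show k + 1 - (k+1) + (i+1) = i+1 from by omega])
        rw [h5, one_mul]

lemma gb_m2 (y : R) (n j : ℕ) :
    gb y (2*n+2) (j+2) = y^(j+2) * gb y (2*n) (j+2)
      + (1 + y^(2*n+1)) * gb y (2*n) (j+1) + y^(2*n-j) * gb y (2*n) j := by
  have hd : gb y (2*n+2) (j+2)
      = gb y (2*n+1) (j+2) + y^((2*n+1)-(j+1)) * gb y (2*n+1) (j+1) := rfl
  rw [Nat.succ_sub_succ] at hd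
  have hb1 := gb_pascalB y (2*n) (j+1)
  have hb2 := gb_pascalB y (2*n) j
  by_cases hj : j ≤ 2*n
  · have e : y^(2*n-j) * y^(j+1) = y^(2*n+1) := by
      rw [← pow_add]; congr 1; omega
    linear_combination hd + hb1 + y^(2*n-j)*hb2 + gb y (2*n) (j+1) * e
  · have z0 : gb y (2*n) j = 0 := gb_zero y (by omega)
    have z1 : gb y (2*n) (j+1) = 0 := gb_zero y (by omega)
    have z2 : gb y (2*n) (j+2) = 0 := gb_zero y (by omega)
    have z3 : gb y (2*n+2) (j+2) = 0 := gb_zero y (by omega)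
    rw [z0, z1, z2, z3]
    ring

lemma gb_m1 (y : R) (n : ℕ) :
    gb y (2*n+2) 1 = y * gb y (2*n) 1 + (1 + y^(2*n+1)) * gb y (2*n) 0 := by
  have hd : gb y (2*n+2) 1 = gb y (2*n+1) 1 + y^((2*n+1)-0) * gb y (2*n+1) 0 := rfl
  have hb := gb_pascalB y (2*n) 0
  simp only [gb_one, Nat.sub_zero, zero_add, pow_one, mul_one] at hd hb ⊢
  rw [hd, hb]
  ring

lemma natdist_cast (a b : ℕ) : (Nat.dist a b : ℤ) = |(a:ℤ) - b| := by
  rcases le_total a b with h | h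
  · rw [Nat.dist_eq_sub_of_le h, abs_sub_comm, abs_of_nonneg (by
      simpa using (Nat.cast_le (α := ℤ)).2 h)]
    push_cast [h]; ring
  · rw [Nat.dist_eq_sub_of_le_right h, abs_of_nonneg (by
      simpa using (Nat.cast_le (α := ℤ)).2 h)]
    push_cast [h]; ring

lemma distE1 (i n : ℕ) :
    Nat.dist (i+2) (n+1) ^2 + 2*(i+2) = 2*n+1 + Nat.dist (i+2) n ^2 := by
  zify
  rw [natdist_cast, natdist_cast, sq_abs, sq_abs]
  push_cast; ring

lemma distE3 (i n : ℕ) (h : i ≤ 2*n) :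
    Nat.dist (i+2) (n+1) ^2 + 2*(2*n-i) = 2*n+1 + Nat.dist i n ^2 := by
  zify [h]
  rw [natdist_cast, natdist_cast, sq_abs, sq_abs]
  push_cast; ring

lemma distJ1 (n : ℕ) (h : 1 ≤ n) : Nat.dist 1 n ^2 + (2*n+1) = n^2 + 2 := by
  zify
  rw [natdist_cast, sq_abs]
  push_cast; ring

lemma shift1 (z : R) (c : ℕ → R) (m : ℕ) :
    (∑ j ∈ range m, c j * z^j) * z
      = ∑ j ∈ range (m+1), (if j = 0 then 0 else c (j-1)) * z^j := by
  rw [Finset.sum_range_succ' (fun j => (if j = 0 then (0:R) else c (j-1)) * z^j) m,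
    Finset.sum_mul]
  simp only [Nat.succ_ne_zero, if_false, Nat.add_sub_cancel, if_true, Nat.succ_sub_one,
    ite_true, ite_false, zero_mul, add_zero, if_pos rfl]
  exact Finset.sum_congr rfl fun j _ => by ring

theorem jtp (z x : R) (n : ℕ) :
    ∏ k ∈ range n, ((1 + z * x^(2*k+1)) * (z + x^(2*k+1)))
      = ∑ j ∈ range (2*n+1), x^(Nat.dist j n ^ 2) * gb (x^2) (2*n) j * z^j := by
  induction n with
  | zero => simp [gb_one]
  | succ n ih =>
    set a : ℕ → R := fun j => x^(Nat.dist j n ^2) * gb (x^2) (2*n) j with ha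
    set c1 : ℕ → R := fun j => if j = 0 then 0 else a (j-1) with hc1
    set c2 : ℕ → R := fun j => if j = 0 then 0 else c1 (j-1) with hc2
    set E : R := ∑ j ∈ range (2*n+1), a j * z^j with hE
    have hc1v : ∀ j, c1 (j+1) = a j := fun j => by
      simp only [hc1, Nat.succ_ne_zero, if_false, Nat.add_sub_cancel, ite_false]
    have hc1v0 : c1 0 = 0 := by simp [hc1]
    have hc2v : ∀ j, c2 (j+2) = a j := fun j => by
      simp only [hc2, Nat.succ_ne_zero, if_false, ite_false, Nat.add_sub_cancel]
      have : j + 2 - 1 = j + 1 := rfl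
      rw [this, hc1v]
    have hc2v0 : c2 0 = 0 := by simp [hc2]
    have hc2v1 : c2 1 = 0 := by
      simp only [hc2, Nat.succ_ne_zero, if_false, ite_false]
      exact hc1v0
    have hz0 : a (2*n+1) = 0 := by
      simp only [ha]
      rw [gb_zero (x^2) (by omega : 2*n < 2*n+1), mul_zero]
    have hz1 : a (2*n+2) = 0 := by
      simp only [ha]
      rw [gb_zero (x^2) (by omega : 2*n < 2*n+2), mul_zero]
    have hE3 : ∑ j ∈ range (2*n+3), a j * z^j = E := by
      rw [show 2*n+3 = (2*n+2)+1 from rfl, Finset.sum_range_succ,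
        show 2*n+2 = (2*n+1)+1 from rfl, Finset.sum_range_succ, hz0, hz1]
      simp [hE]
    have hEz : E * z = ∑ j ∈ range (2*n+2), c1 j * z^j := shift1 z a (2*n+1)
    have hEz3 : ∑ j ∈ range (2*n+3), c1 j * z^j = E * z := by
      rw [show 2*n+3 = (2*n+2)+1 from rfl, Finset.sum_range_succ, hEz]
      have h9 : c1 (2*n+2) = 0 := by rw [show 2*n+2 = (2*n+1)+1 from rfl, hc1v, hz0]
      rw [h9, zero_mul, add_zero]
    have hEzz : (E * z) * z = ∑ j ∈ range (2*n+3), c2 j * z^j := by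
      rw [hEz]; exact shift1 z c1 (2*n+2)
    have claim : ∀ j ∈ range (2*n+3),
        x^(Nat.dist j (n+1) ^2) * gb (x^2) (2*(n+1)) j * z^j
          = (x^(2*n+1) * (a j) + (1+x^(2*(2*n+1))) * c1 j + x^(2*n+1) * c2 j) * z^j := by
      intro j hj
      congr 1
      match j with
      | 0 =>
        rw [hc1v0, hc2v0, mul_zero, mul_zero, add_zero, add_zero]
        simp only [ha]
        rw [Nat.dist_zero_left, Nat.dist_zero_left, show 2*(n+1) = 2*n+2 from rfl, gb_one, gb_one]
        rw [mul_one, mul_one, ← pow_add]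
        congr 1
        zify; ring
      | 1 =>
        have hc1v1 : c1 1 = a 0 := by simpa using hc1v 0
        rw [hc2v1, mul_zero, add_zero, hc1v1]
        simp only [ha]
        have hdn : Nat.dist 1 (n+1) = n := by
          rw [Nat.dist_eq_sub_of_le (by omega)]; omega
        rw [hdn, Nat.dist_zero_left, show 2*(n+1) = 2*n+2 from rfl, gb_m1 (x^2) n, gb_one]
        have e2 : ((x^2):R)^(2*n+1) = x^(2*(2*n+1)) := by rw [← pow_mul]
        rw [mul_add, e2]
        by_cases hn : n = 0
        · subst hn
          rw [gb_zero (x^2) (by omega : 2*0 < 1)]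
          ring
        · have e1 : (x:R)^(n^2) * (x^2 * gb (x^2) (2*n) 1)
              = x^(2*n+1) * (x^(Nat.dist 1 n ^2) * gb (x^2) (2*n) 1) := by
            rw [← mul_assoc, ← pow_add, ← mul_assoc, ← pow_add]
            congr 2
            have := distJ1 n (by omega)
            omega
          rw [e1]
          ring
      | i+2 =>
        have r1 : i + 2 - 1 = i + 1 := rfl
        rw [show i+2 = (i+1)+1 from rfl, hc1v, hc2v]
        simp only [ha]
        have hij : i ≤ 2*n := by
          simp only [Finset.mem_range] at hj; omega
        rw [show 2*(n+1) = 2*n+2 from rfl, gb_m2 (x^2) n i]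
        have e1 : x^(Nat.dist (i+2) (n+1) ^2) * ((x^2)^(i+2) * gb (x^2) (2*n) (i+2))
            = x^(2*n+1) * (x^(Nat.dist (i+2) n ^2) * gb (x^2) (2*n) (i+2)) := by
          rw [← pow_mul, ← mul_assoc, ← pow_add, ← mul_assoc, ← pow_add]
          congr 2
          have := distE1 i n
          omega
        have e3 : x^(Nat.dist (i+2) (n+1) ^2) * ((x^2)^(2*n-i) * gb (x^2) (2*n) i)
            = x^(2*n+1) * (x^(Nat.dist i n ^2) * gb (x^2) (2*n) i) := by
          rw [← pow_mul, ← mul_assoc, ← pow_add, ← mul_assoc, ← pow_add]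
          congr 2
          have := distE3 i n hij
          omega
        have e2 : ((x^2):R)^(2*n+1) = x^(2*(2*n+1)) := by rw [← pow_mul]
        have hd : Nat.dist (i+2) (n+1) = Nat.dist (i+1) n := Nat.dist_succ_succ
        rw [mul_add, mul_add, e1, e3, e2, hd]
        ring
    rw [Finset.prod_range_succ, ih, show 2*(n+1)+1 = 2*n+3 from by omega]
    rw [Finset.sum_congr rfl claim]
    have expand : (∑ j ∈ range (2*n+3),
        (x^(2*n+1) * (a j) + (1+x^(2*(2*n+1))) * c1 j + x^(2*n+1) * c2 j) * z^j)
        = x^(2*n+1) * (∑ j ∈ range (2*n+3), a j * z^j)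
          + (1+x^(2*(2*n+1))) * (∑ j ∈ range (2*n+3), c1 j * z^j)
          + x^(2*n+1) * (∑ j ∈ range (2*n+3), c2 j * z^j) := by
      rw [Finset.mul_sum, Finset.mul_sum, Finset.mul_sum, ← Finset.sum_add_distrib,
        ← Finset.sum_add_distrib]
      exact Finset.sum_congr rfl fun j _ => by ring
    rw [expand, hE3, hEz3, ← hEzz]
    ring

open PowerSeries

lemma ones_dvd {ι : Type*} (d : R) (s : Finset ι) (f : ι → R)
    (h : ∀ i ∈ s, d ∣ (f i - 1)) : d ∣ (∏ i ∈ s, f i - 1) := by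
  classical
  induction s using Finset.cons_induction with
  | empty => simp
  | cons a s ha ih =>
    rw [Finset.prod_cons]
    have h1 : d ∣ f a - 1 := h a (Finset.mem_cons_self a s)
    have h2 : d ∣ (∏ i ∈ s, f i - 1) := ih (fun i hi => h i (Finset.mem_cons_of_mem hi))
    have e : f a * ∏ i ∈ s, f i - 1 = (f a - 1) * ∏ i ∈ s, f i + (∏ i ∈ s, f i - 1) := by ring
    rw [e]
    exact dvd_add (h1.mul_right _) h2

lemma ones_mul (d a b : R) (ha : d ∣ a - 1) (hb : d ∣ b - 1) : d ∣ a * b - 1 := by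
  have e : a * b - 1 = (a-1) * b + (b-1) := by ring
  rw [e]
  exact dvd_add (ha.mul_right _) hb

lemma sum_sym {M : Type*} [AddCommMonoid M] (g : ℕ → M) (n : ℕ) :
    ∑ j ∈ range (2*n+1), g j = g n + ∑ i ∈ range n, (g (n+(i+1)) + g (n - (i+1))) := by
  rw [Finset.range_eq_Ico,
    ← Finset.sum_Ico_consecutive g (Nat.zero_le (n+1)) (by omega : n+1 ≤ 2*n+1),
    Finset.sum_Ico_eq_sum_range, Finset.sum_Ico_eq_sum_range]
  have e1 : (∑ k ∈ range (n+1-0), g (0+k)) = ∑ k ∈ range n, g k + g n := by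
    rw [show n+1-0 = n+1 from rfl]
    simp only [Nat.zero_add]
    rw [Finset.sum_range_succ]
  have e2 : (∑ k ∈ range (2*n+1-(n+1)), g (n+1+k)) = ∑ i ∈ range n, g (n+(i+1)) := by
    rw [show 2*n+1-(n+1) = n from by omega]
    exact Finset.sum_congr rfl fun k _ => by rw [show n+1+k = n+(k+1) from by omega]
  have e3 : (∑ k ∈ range n, g k) = ∑ i ∈ range n, g (n-(i+1)) := by
    rw [← Finset.sum_range_reflect]
    exact Finset.sum_congr rfl fun k _ => by rw [show n-1-k = n-(k+1) from by omega]
  rw [e1, e2, e3, Finset.sum_add_distrib,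
    add_comm (∑ i ∈ range n, g (n-(i+1))) (g n), add_assoc,
    add_comm (∑ i ∈ range n, g (n-(i+1))) (∑ i ∈ range n, g (n+(i+1)))]

/-- Per-term truncation estimate. -/
lemma gb_trunc {R : Type*} [CommRing R] (u : R) (n j : ℕ) (hj : j ≤ 2*n) :
    u^(2*(n - Nat.dist j n)+2) ∣
      (gb (u^2) (2*n) j * ∏ i ∈ range (2*n), (1 - (u^2)^(i+1)) - 1) := by
  have hd1 : n - Nat.dist j n ≤ 2*n - j := by
    rcases le_total j n with h | h
    · rw [Nat.dist_eq_sub_of_le h]; omega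
    · rw [Nat.dist_eq_sub_of_le_right h]; omega
  have hd2 : n - Nat.dist j n ≤ j := by
    rcases le_total j n with h | h
    · rw [Nat.dist_eq_sub_of_le h]; omega
    · rw [Nat.dist_eq_sub_of_le_right h]; omega
  rw [← Finset.prod_range_mul_prod_Ico (fun i => (1 - (u^2)^(i+1))) hj,
    ← mul_assoc, gb_prod (u^2) (2*n) j hj]
  apply ones_mul
  · apply ones_dvd
    intro i _
    have e : (1 - (u^2)^(2*n-j+(i+1))) - 1 = -(u^(2*(2*n-j+(i+1)))) := by
      rw [← pow_mul]; ring
    rw [e]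
    exact (dvd_neg).mpr (pow_dvd_pow u (by omega))
  · apply ones_dvd
    intro i hi
    have hi' : j ≤ i := (Finset.mem_Ico.mp hi).1
    have e : (1 - (u^2)^(i+1)) - 1 = -(u^(2*(i+1))) := by
      rw [← pow_mul]; ring
    rw [e]
    exact (dvd_neg).mpr (pow_dvd_pow u (by omega))

theorem gauss1 {R : Type*} [CommRing R] (n : ℕ) :
    (X:PowerSeries R)^(2*n+1) ∣
      ((∏ k ∈ range n, (1 - (X:PowerSeries R)^(2*k+1))^2)
          * (∏ i ∈ range (2*n), (1 - (X:PowerSeries R)^(2*(i+1))))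
        - (1 + 2 * ∑ i ∈ range n, (-1)^(i+1) * (X:PowerSeries R)^((i+1)^2))) := by
  set A := ∏ k ∈ range n, (1 - (X:PowerSeries R)^(2*k+1))^2 with hA
  set W := ∏ i ∈ range (2*n), (1 - ((X:PowerSeries R)^2)^(i+1)) with hW
  set Sg := ∑ i ∈ range n, (-1)^(i+1) * (X:PowerSeries R)^((i+1)^2) with hSg
  have hWW : (∏ i ∈ range (2*n), (1 - (X:PowerSeries R)^(2*(i+1)))) = W := by
    rw [hW]
    exact Finset.prod_congr rfl fun i _ => by rw [← pow_mul]
  have hjtp := jtp (-1 : PowerSeries R) X n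
  have hL : (∏ k ∈ range n, ((1 + (-1) * (X:PowerSeries R)^(2*k+1)) * ((-1) + X^(2*k+1))))
      = (-1)^n * A := by
    have h1 : (∏ k ∈ range n, ((1 + (-1) * (X:PowerSeries R)^(2*k+1)) * ((-1) + X^(2*k+1))))
        = ∏ k ∈ range n, ((-1) * (1 - (X:PowerSeries R)^(2*k+1))^2) :=
      Finset.prod_congr rfl fun k _ => by ring
    rw [h1, Finset.prod_mul_distrib, Finset.prod_const, Finset.card_range, hA]
  rw [hL] at hjtp
  set T := ∑ j ∈ range (2*n+1), ((-1):PowerSeries R)^j * X^(Nat.dist j n^2) with hT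
  have hMul : (-1:PowerSeries R)^n * A * W
      = ∑ j ∈ range (2*n+1),
          ((-1)^j * ((X:PowerSeries R)^(Nat.dist j n^2) * (gb ((X:PowerSeries R)^2) (2*n) j * W))) := by
    rw [hjtp, Finset.sum_mul]
    exact Finset.sum_congr rfl fun j _ => by ring
  have step1 : (X:PowerSeries R)^(2*n+1) ∣ ((-1)^n * A * W - T) := by
    rw [hMul, hT, ← Finset.sum_sub_distrib]
    apply Finset.dvd_sum
    intro j hj
    have hj' : j ≤ 2*n := by
      have := Finset.mem_range.mp hj; omega
    have h1 := gb_trunc (X:PowerSeries R) n j hj'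
    have e : ((-1:PowerSeries R)^j * ((X:PowerSeries R)^(Nat.dist j n^2)
            * (gb ((X:PowerSeries R)^2) (2*n) j * W)))
          - (-1)^j * X^(Nat.dist j n^2)
        = (-1)^j * ((X:PowerSeries R)^(Nat.dist j n^2)
            * (gb ((X:PowerSeries R)^2) (2*n) j * W - 1)) := by ring
    rw [e]
    have hle : 2*n+1 ≤ Nat.dist j n ^2 + (2*(n - Nat.dist j n)+2) := by
      have hdist : Nat.dist j n ≤ n := by
        rcases le_total j n with h | h
        · rw [Nat.dist_eq_sub_of_le h]; omega
        · rw [Nat.dist_eq_sub_of_le_right h]; omega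
      have hsq : 2 * Nat.dist j n ≤ Nat.dist j n ^2 + 1 := by
        rcases Nat.eq_zero_or_pos (Nat.dist j n) with h | h
        · omega
        · nlinarith
      omega
    have h2 : (X:PowerSeries R)^(Nat.dist j n^2) * X^(2*(n - Nat.dist j n)+2) ∣
        (X:PowerSeries R)^(Nat.dist j n^2) * (gb ((X:PowerSeries R)^2) (2*n) j * W - 1) :=
      mul_dvd_mul_left _ h1
    rw [← pow_add] at h2
    exact Dvd.dvd.mul_left ((pow_dvd_pow X hle).trans h2) _
  have step2 : T = (-1)^n * (1 + 2 * Sg) := by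
    rw [hT, sum_sym (fun j => ((-1):PowerSeries R)^j * X^(Nat.dist j n^2)) n]
    have hgn : ((-1):PowerSeries R)^n * X^(Nat.dist n n^2) = (-1)^n := by
      rw [Nat.dist_self, show (0:ℕ)^2 = 0 from rfl, pow_zero, mul_one]
    have hpair : ∀ i ∈ range n,
        ((-1):PowerSeries R)^(n+(i+1)) * X^(Nat.dist (n+(i+1)) n^2)
          + ((-1):PowerSeries R)^(n-(i+1)) * X^(Nat.dist (n-(i+1)) n^2)
        = (-1)^n * (2 * ((-1)^(i+1) * (X:PowerSeries R)^((i+1)^2))) := by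
      intro i hi
      have hin : i < n := Finset.mem_range.mp hi
      have hd1 : Nat.dist (n+(i+1)) n = i+1 := by
        rw [Nat.dist_eq_sub_of_le_right (by omega)]; omega
      have hd2 : Nat.dist (n-(i+1)) n = i+1 := by
        rw [Nat.dist_eq_sub_of_le (by omega)]; omega
      have hsign : ((-1):PowerSeries R)^(n-(i+1)) = (-1)^(n+(i+1)) := by
        rw [show n+(i+1) = (n-(i+1)) + 2*(i+1) from by omega, pow_add, pow_mul]
        norm_num
      rw [hd1, hd2, hsign, pow_add]
      ring
    rw [Finset.sum_congr rfl hpair, ← Finset.mul_sum, ← Finset.mul_sum, hgn, ← hSg]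
    ring
  have hq : ((-1:PowerSeries R)^n) * ((-1:PowerSeries R)^n) = 1 := by
    rw [← pow_add, ← two_mul, pow_mul]
    norm_num
  have key : A * W - (1 + 2*Sg) = (-1)^n * ((-1)^n * A * W - T) := by
    rw [step2]
    linear_combination (-(A*W - (1+2*Sg))) * hq
  rw [hWW, key]
  exact Dvd.dvd.mul_left step1 _

theorem gauss2 (n : ℕ) (hn : 1 ≤ n) :
    ((X:PowerSeries ℤ)^5)^(2*n) ∣
      ((∏ k ∈ range n, (1 + ((X:PowerSeries ℤ)^5)^(2*k+2)))
        * (∏ k ∈ range (n-1), (1 + ((X:PowerSeries ℤ)^5)^(2*k+2)))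
        * (∏ i ∈ range (2*n), (1 - (((X:PowerSeries ℤ)^5)^2)^(i+1)))
       - ∑ i ∈ range n, ((X:PowerSeries ℤ)^5)^(i*(i+1))) := by
  set x : PowerSeries ℤ := (X:PowerSeries ℤ)^5 with hx
  set P := ∏ k ∈ range n, (1 + x^(2*k+2)) with hP
  set Q := ∏ k ∈ range (n-1), (1 + x^(2*k+2)) with hQ
  set W := ∏ i ∈ range (2*n), (1 - (x^2)^(i+1)) with hW
  set Ψ := ∑ i ∈ range n, x^(i*(i+1)) with hPsi
  have hjtp := jtp x x n
  have hL : (∏ k ∈ range n, ((1 + x * x^(2*k+1)) * (x + x^(2*k+1))))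
      = x^n * (2 * (P * Q)) := by
    have h1 : (∏ k ∈ range n, ((1 + x * x^(2*k+1)) * (x + x^(2*k+1))))
        = ∏ k ∈ range n, (x * ((1 + x^(2*k+2)) * (1 + x^(2*k)))) :=
      Finset.prod_congr rfl fun k _ => by ring
    have h2 : (∏ k ∈ range n, (1 + x^(2*k))) = 2 * Q := by
      rw [show n = (n-1)+1 from by omega,
        Finset.prod_range_succ' (fun k => (1 + x^(2*k))) (n-1), hQ]
      have : (1 + x^(2*0)) = 2 := by norm_num
      rw [this]
      rw [Finset.prod_congr rfl (fun k _ => by rw [show 2*(k+1) = 2*k+2 from by omega])]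
      ring
    rw [h1, Finset.prod_mul_distrib, Finset.prod_mul_distrib, Finset.prod_const,
      Finset.card_range, h2, hP]
    ring
  rw [hL] at hjtp
  have hMul : x^n * (2 * (P * Q)) * W
      = ∑ j ∈ range (2*n+1),
          (x^(Nat.dist j n^2 + j) * (gb (x^2) (2*n) j * W)) := by
    rw [hjtp, Finset.sum_mul]
    exact Finset.sum_congr rfl fun j _ => by rw [pow_add]; ring
  set T := ∑ j ∈ range (2*n+1), x^(Nat.dist j n^2 + j) with hT
  have step1 : (x^(3*n)) ∣ (x^n * (2 * (P * Q)) * W - T) := by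
    rw [hMul, hT, ← Finset.sum_sub_distrib]
    apply Finset.dvd_sum
    intro j hj
    have hj' : j ≤ 2*n := by
      have := Finset.mem_range.mp hj; omega
    have h1 := gb_trunc x n j hj'
    have e : x^(Nat.dist j n^2 + j) * (gb (x^2) (2*n) j * W) - x^(Nat.dist j n^2 + j)
        = x^(Nat.dist j n^2 + j) * (gb (x^2) (2*n) j * W - 1) := by ring
    rw [e]
    have hjd : n ≤ j + Nat.dist j n := by
      rcases le_total j n with h | h
      · rw [Nat.dist_eq_sub_of_le h]; omega
      · rw [Nat.dist_eq_sub_of_le_right h]; omega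
    have hle : 3*n ≤ (Nat.dist j n^2 + j) + (2*(n - Nat.dist j n)+2) := by
      have hdist : Nat.dist j n ≤ n := by
        rcases le_total j n with h | h
        · rw [Nat.dist_eq_sub_of_le h]; omega
        · rw [Nat.dist_eq_sub_of_le_right h]; omega
      have h3 : 3 * Nat.dist j n ≤ Nat.dist j n ^2 + 2 := by
        rcases Nat.lt_or_ge (Nat.dist j n) 3 with h | h
        · interval_cases (Nat.dist j n) <;> norm_num
        · nlinarith
      omega
    have h2 : x^(Nat.dist j n^2 + j) * x^(2*(n - Nat.dist j n)+2) ∣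
        x^(Nat.dist j n^2 + j) * (gb (x^2) (2*n) j * W - 1) :=
      mul_dvd_mul_left _ h1
    rw [← pow_add] at h2
    exact (pow_dvd_pow x hle).trans h2
  have step2 : T = 2 * (x^n * Ψ) + x^(n + n*(n+1)) := by
    rw [hT, sum_sym (fun j => x^(Nat.dist j n^2 + j)) n]
    have hgn : x^(Nat.dist n n^2 + n) = x^n := by
      rw [Nat.dist_self, show (0:ℕ)^2 = 0 from rfl, Nat.zero_add]
    have hpair : ∀ i ∈ range n,
        x^(Nat.dist (n+(i+1)) n^2 + (n+(i+1))) + x^(Nat.dist (n-(i+1)) n^2 + (n-(i+1)))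
        = x^(n + (i+1)*(i+2)) + x^(n + i*(i+1)) := by
      intro i hi
      have hin : i < n := Finset.mem_range.mp hi
      have hd1 : Nat.dist (n+(i+1)) n = i+1 := by
        rw [Nat.dist_eq_sub_of_le_right (by omega)]; omega
      have hd2 : Nat.dist (n-(i+1)) n = i+1 := by
        rw [Nat.dist_eq_sub_of_le (by omega)]; omega
      rw [hd1, hd2, show (i+1)^2 + (n+(i+1)) = n + (i+1)*(i+2) from by ring,
        show (i+1)^2 + (n-(i+1)) = n + i*(i+1) from by
          have : (i+1)^2 = i*(i+1) + (i+1) := by ring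
          omega]
    rw [Finset.sum_congr rfl hpair, Finset.sum_add_distrib, hgn]
    have hshift : (∑ i ∈ range n, x^(n + (i+1)*(i+2)))
        = ∑ i ∈ range (n+1), x^(n + i*(i+1)) - x^n := by
      rw [Finset.sum_range_succ' (fun i => x^(n + i*(i+1))) n]
      simp
    have htop : (∑ i ∈ range (n+1), x^(n + i*(i+1)))
        = ∑ i ∈ range n, x^(n + i*(i+1)) + x^(n + n*(n+1)) := Finset.sum_range_succ _ n
    have hfac : (∑ i ∈ range n, x^(n + i*(i+1))) = x^n * Ψ := by
      rw [hPsi, Finset.mul_sum]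
      exact Finset.sum_congr rfl fun i _ => by rw [pow_add]
    rw [hshift, htop, hfac]
    ring
  -- combine and cancel
  have hcomb : (x^(3*n)) ∣ x^n * (2*(P*Q*W) - 2*Ψ - x^(n*(n+1))) := by
    have e : x^n * (2*(P*Q*W) - 2*Ψ - x^(n*(n+1)))
        = x^n * (2 * (P * Q)) * W - (2 * (x^n * Ψ) + x^(n + n*(n+1))) := by
      rw [pow_add]; ring
    rw [e, ← step2]
    exact step1
  have hxne : x^n ≠ 0 := pow_ne_zero _ (by
    rw [hx]; exact pow_ne_zero _ PowerSeries.X_ne_zero)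
  have hcancel : (x^(2*n)) ∣ (2*(P*Q*W) - 2*Ψ - x^(n*(n+1))) := by
    have e3 : (3:ℕ)*n = n + 2*n := by omega
    rw [e3, pow_add] at hcomb
    exact (mul_dvd_mul_iff_left hxne).mp hcomb
  have habs : (x^(2*n)) ∣ x^(n*(n+1)) := pow_dvd_pow x (by nlinarith)
  have h2d : (x^(2*n)) ∣ 2*((P*Q*W) - Ψ) := by
    have e : 2*((P*Q*W) - Ψ) = (2*(P*Q*W) - 2*Ψ - x^(n*(n+1))) + x^(n*(n+1)) := by ring
    rw [e]
    exact dvd_add hcancel habs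
  -- cancel the factor 2
  simp only [hx, ← pow_mul] at h2d ⊢
  rw [X_pow_dvd_iff] at h2d ⊢
  intro m hm
  have := h2d m hm
  rw [show (2:PowerSeries ℤ) * (P*Q*W - Ψ) = (2:ℤ) • (P*Q*W - Ψ) from by
    rw [zsmul_eq_mul]; norm_num, map_smul] at this
  have h2z : (2:ℤ) * (coeff (R := ℤ) m) (P*Q*W - Ψ) = 0 := this
  have := mul_eq_zero.mp h2z
  rcases this with h | h
  · norm_num at h
  · exact h

lemma prodIcc1 {M : Type*} [CommMonoid M] (f : ℕ → M) (N : ℕ) :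
    ∏ k ∈ Finset.Icc 1 N, f k = ∏ i ∈ range N, f (i+1) := by
  rw [← Finset.Ico_add_one_right_eq_Icc, Finset.prod_Ico_eq_prod_range]
  exact Finset.prod_congr rfl fun i _ => by rw [Nat.add_comm]

lemma split2 {M : Type*} [CommMonoid M] (f : ℕ → M) (n : ℕ) :
    ∏ k ∈ range (2*n), f k = (∏ k ∈ range n, f (2*k)) * ∏ k ∈ range n, f (2*k+1) := by
  induction n with
  | zero => simp
  | succ n ih =>
    rw [show 2*(n+1) = (2*n+1)+1 from by omega, Finset.prod_range_succ,
      show 2*n+1 = (2*n)+1 from rfl, Finset.prod_range_succ, ih,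
      Finset.prod_range_succ, Finset.prod_range_succ]
    rw [mul_assoc]
    exact mul_mul_mul_comm (∏ k ∈ range n, f (2*k)) (∏ k ∈ range n, f (2*k+1))
      (f (2*n)) (f (2*n+1))

lemma onepow (d a : R) (t : ℕ) (h : d ∣ a - 1) : d ∣ a^t - 1 := by
  refine h.trans ?_
  simpa using sub_dvd_pow_sub_pow a 1 t

theorem main8 (N : ℕ) :
    (X:PowerSeries (ZMod 8))^(N+1) ∣
      ((∏ k ∈ Finset.Icc 1 N, (1 - X^(2*k))^5)
        - (∏ k ∈ Finset.Icc 1 N, (1 - X^k)^(10))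
          * (1 - 2*(∑ i ∈ range N, (-1)^(i+1) * X^((i+1)^2))
             + 4*(∑ i ∈ range N, (-1)^(i+1) * X^((i+1)^2))^2)) := by
  set R8 := ZMod 8
  set O := ∏ k ∈ range N, (1 - (X:PowerSeries R8)^(2*k+1)) with hO
  set E := ∏ i ∈ range N, (1 - (X:PowerSeries R8)^(2*(i+1))) with hE
  set W := ∏ i ∈ range (2*N), (1 - (X:PowerSeries R8)^(2*(i+1))) with hW
  set Sg := ∑ i ∈ range N, (-1)^(i+1) * (X:PowerSeries R8)^((i+1)^2) with hSg
  set H := 1 - 2*Sg + 4*Sg^2 with hH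
  set F := ∏ k ∈ Finset.Icc 1 N, (1 - (X:PowerSeries R8)^(2*k))^5 with hF
  set G := ∏ k ∈ Finset.Icc 1 N, (1 - (X:PowerSeries R8)^k)^(10) with hG
  set d := (X:PowerSeries R8)^(N+1) with hd
  show d ∣ F - G * H
  -- Gauss identity
  have c1 : d ∣ O^2 * W - (1 + 2*Sg) := by
    have hg := gauss1 (R := R8) N
    rw [Finset.prod_pow] at hg
    exact (pow_dvd_pow X (by omega : N+1 ≤ 2*N+1)).trans hg
  -- W ≡ E
  have hFW : d ∣ W - E := by
    rw [hW, hE, ← Finset.prod_range_mul_prod_Ico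
      (fun i => (1 - (X:PowerSeries R8)^(2*(i+1)))) (by omega : N ≤ 2*N)]
    have h1 : d ∣ (∏ i ∈ Finset.Ico N (2*N), (1 - (X:PowerSeries R8)^(2*(i+1)))) - 1 := by
      apply ones_dvd
      intro i hi
      have hiN : N ≤ i := (Finset.mem_Ico.mp hi).1
      have e : (1 - (X:PowerSeries R8)^(2*(i+1))) - 1 = -(X^(2*(i+1))) := by ring
      rw [e, hd]
      exact (dvd_neg).mpr (pow_dvd_pow X (by omega))
    have e : (∏ i ∈ range N, (1 - (X:PowerSeries R8)^(2*(i+1))))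
          * (∏ i ∈ Finset.Ico N (2*N), (1 - (X:PowerSeries R8)^(2*(i+1))))
        - (∏ i ∈ range N, (1 - (X:PowerSeries R8)^(2*(i+1))))
        = (∏ i ∈ range N, (1 - (X:PowerSeries R8)^(2*(i+1))))
          * ((∏ i ∈ Finset.Ico N (2*N), (1 - (X:PowerSeries R8)^(2*(i+1)))) - 1) := by ring
    rw [e]
    exact h1.mul_left _
  -- F = E^5
  have hFE : F = E^5 := by
    rw [hF, prodIcc1 (fun k => (1 - (X:PowerSeries R8)^(2*k))^5) N, hE, ← Finset.prod_pow]
  -- (O*E)^10 ≡ G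
  have h4 : d ∣ (O*E)^(10) - G := by
    have hsplit : (∏ k ∈ range (2*N), (1 - (X:PowerSeries R8)^(k+1))) = O * E := by
      rw [split2 (fun k => (1 - (X:PowerSeries R8)^(k+1))) N, hO, hE]
      congr 1
    have hG2 : (O*E)^(10) = ∏ k ∈ range (2*N), (1 - (X:PowerSeries R8)^(k+1))^(10) := by
      rw [Finset.prod_pow, hsplit]
    have hGr : G = ∏ i ∈ range N, (1 - (X:PowerSeries R8)^(i+1))^(10) := by
      rw [hG, prodIcc1 (fun k => (1 - (X:PowerSeries R8)^k)^(10)) N]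
    rw [hG2, hGr, ← Finset.prod_range_mul_prod_Ico
      (fun k => (1 - (X:PowerSeries R8)^(k+1))^(10)) (by omega : N ≤ 2*N)]
    have h1 : d ∣ (∏ k ∈ Finset.Ico N (2*N), (1 - (X:PowerSeries R8)^(k+1))^(10)) - 1 := by
      apply ones_dvd
      intro i hi
      have hiN : N ≤ i := (Finset.mem_Ico.mp hi).1
      apply onepow
      have e : (1 - (X:PowerSeries R8)^(i+1)) - 1 = -(X^(i+1)) := by ring
      rw [e, hd]
      exact (dvd_neg).mpr (pow_dvd_pow X (by omega))
    have e : (∏ k ∈ range N, (1 - (X:PowerSeries R8)^(k+1))^(10))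
          * (∏ k ∈ Finset.Ico N (2*N), (1 - (X:PowerSeries R8)^(k+1))^(10))
        - (∏ i ∈ range N, (1 - (X:PowerSeries R8)^(i+1))^(10))
        = (∏ k ∈ range N, (1 - (X:PowerSeries R8)^(k+1))^(10))
          * ((∏ k ∈ Finset.Ico N (2*N), (1 - (X:PowerSeries R8)^(k+1))^(10)) - 1) := by ring
    rw [e]
    exact h1.mul_left _
  -- the inverse identity mod 8
  have h8 : (8 : PowerSeries R8) = 0 := by
    have e : (8 : PowerSeries R8) = PowerSeries.C (R := R8) (8 : R8) := (map_ofNat (PowerSeries.C (R := R8)) 8).symm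
    rw [e, show (8 : R8) = 0 from by decide, map_zero]
  have hinv : (1 + 2*Sg)^5 * H = 1 := by
    rw [hH]
    linear_combination (Sg + 3*Sg^2 + 5*Sg^3 + 10*Sg^4 + 24*Sg^5 + 32*Sg^6 + 16*Sg^7) * h8
  -- W is a unit
  have hCW : PowerSeries.constantCoeff (R := R8) W = 1 := by
    rw [hW, map_prod]
    rw [Finset.prod_congr rfl (fun i _ => show PowerSeries.constantCoeff (R := R8)
      (1 - (X:PowerSeries R8)^(2*(i+1))) = 1 from by
        rw [map_sub, map_one, map_pow, PowerSeries.constantCoeff_X, zero_pow (by omega), sub_zero])]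
    exact Finset.prod_const_one
  have hUW : IsUnit W := IsUnit.of_mul_eq_one (PowerSeries.invOfUnit W 1)
      (PowerSeries.mul_invOfUnit W 1 (by rw [hCW]; rfl))
  have hU : IsUnit (W^5) := hUW.pow 5
  -- main computation
  have h1 : d ∣ W^5 - F := by rw [hFE]; exact hFW.trans (sub_dvd_pow_sub_pow W E 5)
  have h2 : d ∣ W^(10) - E^(10) := hFW.trans (sub_dvd_pow_sub_pow W E 10)
  have h3 : d ∣ (O^2*W)^5 - (1+2*Sg)^5 := c1.trans (sub_dvd_pow_sub_pow _ _ 5)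
  have h5 : E^(10)*(1 - (1+2*Sg)^5*H) = 0 := by rw [hinv]; ring
  have key : (F - G*H)*W^5 =
      -(W^5*(W^5 - F)) + (W^(10) - E^(10))
      + (-(E^(10)*H*((O^2*W)^5 - (1+2*Sg)^5)) + E^(10)*(1 - (1+2*Sg)^5*H))
      + ((O*E)^(10) - G)*(H*W^5) := by ring
  have dvd_big : d ∣ (F - G*H)*W^5 := by
    rw [key]
    refine dvd_add (dvd_add (dvd_add ?_ h2) ?_) ?_
    · exact (h1.mul_left _).neg_right
    · refine dvd_add ?_ ?_
      · exact (h3.mul_left _).neg_right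
      · rw [h5]; exact dvd_zero d
    · exact h4.mul_right _
  exact (hU.dvd_mul_right).mp dvd_big


theorem pbar_cong (N : ℕ) :
    ((pbar 5 N : ℤ) : ZMod 8)
      = ((PowerSeries.coeff (R := ℤ) N
          (1 - 2*(∑ i ∈ range N, (-1)^(i+1) * (X:PowerSeries ℤ)^((i+1)^2))
            + 4*(∑ i ∈ range N, (-1)^(i+1) * (X:PowerSeries ℤ)^((i+1)^2))^2) : ℤ) : ZMod 8) := by
  classical
  set φ := PowerSeries.map (Int.castRingHom (ZMod 8)) with hφ
  set GZ := ∏ k ∈ Finset.Icc 1 N, (1 - (X:PowerSeries ℤ)^k)^(2*5) with hGZ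
  set FZ := ∏ k ∈ Finset.Icc 1 N, (1 - (X:PowerSeries ℤ)^(2*k))^5 with hFZ
  set SZ := ∑ i ∈ range N, (-1)^(i+1) * (X:PowerSeries ℤ)^((i+1)^2) with hSZ
  set HZ := 1 - 2*SZ + 4*SZ^2 with hHZ
  have hCG : PowerSeries.constantCoeff (R := ℤ) GZ = 1 := by
    rw [hGZ, map_prod]
    rw [Finset.prod_congr rfl (fun k hk => show PowerSeries.constantCoeff (R := ℤ)
      ((1 - (X:PowerSeries ℤ)^k)^(2*5)) = 1 from by
        have hk1 : 1 ≤ k := (Finset.mem_Icc.mp hk).1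
        rw [map_pow, map_sub, map_one, map_pow, PowerSeries.constantCoeff_X,
          zero_pow (by omega), sub_zero, one_pow])]
    exact Finset.prod_const_one
  have hGinv : GZ * PowerSeries.invOfUnit GZ 1 = 1 :=
    PowerSeries.mul_invOfUnit GZ 1 (by rw [hCG]; rfl)
  -- map everything
  have hmapF : φ FZ = ∏ k ∈ Finset.Icc 1 N, (1 - (X:PowerSeries (ZMod 8))^(2*k))^5 := by
    rw [hFZ, hφ, map_prod]
    exact Finset.prod_congr rfl fun k _ => by
      rw [map_pow, map_sub, map_one, map_pow, PowerSeries.map_X]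
  have hmapG : φ GZ = ∏ k ∈ Finset.Icc 1 N, (1 - (X:PowerSeries (ZMod 8))^k)^(10) := by
    rw [hGZ, hφ, map_prod]
    exact Finset.prod_congr rfl fun k _ => by
      rw [map_pow, map_sub, map_one, map_pow, PowerSeries.map_X]
  have hmapS : φ SZ = ∑ i ∈ range N, (-1)^(i+1) * (X:PowerSeries (ZMod 8))^((i+1)^2) := by
    rw [hSZ, hφ, map_sum]
    exact Finset.sum_congr rfl fun i _ => by
      rw [map_mul, map_pow, map_pow, PowerSeries.map_X, map_neg, map_one]
  have hmapH : φ HZ = 1 - 2*(φ SZ) + 4*(φ SZ)^2 := by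
    rw [hHZ]
    rw [map_add, map_sub, map_one, map_mul, map_mul, map_pow, map_ofNat, map_ofNat]
  -- main8
  have hm := main8 N
  rw [← hmapF, ← hmapG, ← hmapS, ← hmapH] at hm
  obtain ⟨J, hJ⟩ := hm
  -- coefficient computation
  have hpb : (pbar 5 N : ZMod 8)
      = PowerSeries.coeff (R := ZMod 8) N (φ (FZ * PowerSeries.invOfUnit GZ 1)) := by
    rw [hφ, PowerSeries.coeff_map]
    rfl
  rw [hpb]
  have e1 : φ (FZ * PowerSeries.invOfUnit GZ 1)
      = φ HZ + X^(N+1) * (J * φ (PowerSeries.invOfUnit GZ 1)) := by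
    have hmul : φ FZ = φ GZ * φ HZ + X^(N+1) * J := by
      have : φ FZ - φ GZ * φ HZ = X^(N+1) * J := hJ
      linear_combination this
    rw [map_mul, hmul]
    have hGi : φ GZ * φ (PowerSeries.invOfUnit GZ 1) = 1 := by
      rw [← map_mul, hGinv, map_one]
    calc (φ GZ * φ HZ + X^(N+1) * J) * φ (PowerSeries.invOfUnit GZ 1)
        = φ HZ * (φ GZ * φ (PowerSeries.invOfUnit GZ 1))
          + X^(N+1) * (J * φ (PowerSeries.invOfUnit GZ 1)) := by ring
      _ = φ HZ + X^(N+1) * (J * φ (PowerSeries.invOfUnit GZ 1)) := by rw [hGi, mul_one]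
  rw [e1, map_add, PowerSeries.coeff_map]
  have e2 : PowerSeries.coeff (R := ZMod 8) N (X^(N+1) * (J * φ (PowerSeries.invOfUnit GZ 1))) = 0 := by
    have : (X:PowerSeries (ZMod 8))^(N+1) ∣ X^(N+1) * (J * φ (PowerSeries.invOfUnit GZ 1)) :=
      Dvd.intro _ rfl
    exact (PowerSeries.X_pow_dvd_iff.mp this) N (by omega)
  rw [e2, add_zero]
  rfl

lemma coeffH (N : ℕ) (hN : 1 ≤ N) :
    PowerSeries.coeff (R := ℤ) N
        (1 - 2*(∑ i ∈ range N, (-1)^(i+1) * (X:PowerSeries ℤ)^((i+1)^2))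
          + 4*(∑ i ∈ range N, (-1)^(i+1) * (X:PowerSeries ℤ)^((i+1)^2))^2)
      = -2 * (∑ i ∈ range N, (-1:ℤ)^(i+1) * (if N = (i+1)^2 then 1 else 0))
        + 4 * (∑ i ∈ range N, ∑ j ∈ range N, ((-1:ℤ)^(i+1) * (-1:ℤ)^(j+1))
            * (if N = (i+1)^2 + (j+1)^2 then 1 else 0)) := by
  classical
  set SZ := ∑ i ∈ range N, (-1)^(i+1) * (X:PowerSeries ℤ)^((i+1)^2) with hSZ
  have hterm : ∀ (e : ℕ) (s : ℤ), PowerSeries.coeff (R := ℤ) N ((PowerSeries.C (R := ℤ) s) * X^e)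
      = s * (if N = e then 1 else 0) := by
    intro e s
    rw [PowerSeries.coeff_C_mul, PowerSeries.coeff_X_pow]
  have hC : ∀ i : ℕ, ((-1 : PowerSeries ℤ))^(i+1) = PowerSeries.C (R := ℤ) ((-1:ℤ)^(i+1)) := by
    intro i
    rw [map_pow, map_neg, map_one]
  have hcS : PowerSeries.coeff (R := ℤ) N SZ
      = ∑ i ∈ range N, (-1:ℤ)^(i+1) * (if N = (i+1)^2 then 1 else 0) := by
    rw [hSZ, map_sum]
    exact Finset.sum_congr rfl fun i _ => by rw [hC i, hterm]
  have hcS2 : PowerSeries.coeff (R := ℤ) N (SZ^2)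
      = ∑ i ∈ range N, ∑ j ∈ range N, ((-1:ℤ)^(i+1) * (-1:ℤ)^(j+1))
          * (if N = (i+1)^2 + (j+1)^2 then 1 else 0) := by
    rw [pow_two, hSZ, Finset.sum_mul_sum, map_sum]
    refine Finset.sum_congr rfl fun i _ => by
      rw [map_sum]
      refine Finset.sum_congr rfl fun j _ => ?_
      rw [show ((-1) ^ (i+1) * (X:PowerSeries ℤ)^((i+1)^2)) * ((-1) ^ (j+1) * X^((j+1)^2))
          = (PowerSeries.C (R := ℤ) ((-1:ℤ)^(i+1) * (-1:ℤ)^(j+1))) * X^((i+1)^2 + (j+1)^2) from by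
        rw [map_mul, ← hC i, ← hC j, pow_add]; ring]
      rw [hterm]
  have hsplit : PowerSeries.coeff (R := ℤ) N (1 - 2*SZ + 4*SZ^2)
      = PowerSeries.coeff (R := ℤ) N 1 - 2 * PowerSeries.coeff (R := ℤ) N SZ
        + 4 * PowerSeries.coeff (R := ℤ) N (SZ^2) := by
    rw [map_add, map_sub]
    rw [show (2:PowerSeries ℤ)*SZ = (2:ℤ) • SZ from by rw [zsmul_eq_mul]; norm_num,
      show (4:PowerSeries ℤ)*SZ^2 = (4:ℤ) • SZ^2 from by rw [zsmul_eq_mul]; norm_num,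
      map_smul, map_smul, smul_eq_mul, smul_eq_mul]
  rw [hsplit, hcS, hcS2, PowerSeries.coeff_one, if_neg (by omega : ¬ N = 0)]
  ring

lemma sig1_zero (N : ℕ) (h4 : N % 4 = 2) :
    (∑ i ∈ range N, (-1:ℤ)^(i+1) * (if N = (i+1)^2 then 1 else 0)) = 0 := by
  apply Finset.sum_eq_zero
  intro i _
  rw [if_neg, mul_zero]
  intro h
  rcases Nat.even_or_odd (i+1) with ⟨m, hm⟩ | ⟨m, hm⟩
  · have e : (i+1)^2 = 4*(m*m) := by rw [hm]; ring
    generalize m*m = K at e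
    omega
  · have e : (i+1)^2 = 4*(m*m) + 4*m + 1 := by rw [hm]; ring
    generalize m*m = K at e
    omega

lemma sumsq_unique {a b : ℕ} (h : a*(a+1) = b*(b+1)) : a = b := by
  rcases lt_trichotomy a b with hl | he | hl
  · have := Nat.mul_lt_mul'' hl (by omega : a+1 < b+1)
    omega
  · exact he
  · have := Nat.mul_lt_mul'' hl (by omega : b+1 < a+1)
    omega

lemma sq_unique {a b : ℕ} (h : (a+1)^2 = (b+1)^2) : a = b := by
  have := Nat.pow_left_injective (n := 2) (by omega) h
  omega

lemma sig2_parity (N : ℕ) :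
    ((∑ i ∈ range N, ∑ j ∈ range N, ((-1:ℤ)^(i+1) * (-1:ℤ)^(j+1))
        * (if N = (i+1)^2 + (j+1)^2 then 1 else 0) : ℤ) : ZMod 2)
      = (if ∃ i, i ∈ range N ∧ N = 2*(i+1)^2 then 1 else 0) := by
  classical
  push_cast
  have hneg : ((-1 : ZMod 2)) = 1 := by decide
  have step1 : (∑ i ∈ range N, ∑ j ∈ range N, ((-1:ZMod 2))^(i+1) * ((-1:ZMod 2))^(j+1)
        * (if N = (i+1)^2 + (j+1)^2 then (1:ZMod 2) else 0))
      = ∑ p ∈ (range N) ×ˢ (range N), (if N = (p.1+1)^2 + (p.2+1)^2 then (1:ZMod 2) else 0) := by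
    rw [Finset.sum_product]
    exact Finset.sum_congr rfl fun i _ => Finset.sum_congr rfl fun j _ => by simp [hneg]
  rw [step1]
  -- split into diagonal and off-diagonal
  rw [← Finset.sum_filter_add_sum_filter_not ((range N) ×ˢ (range N)) (fun p => p.1 = p.2)]
  have hoff : (∑ p ∈ ((range N) ×ˢ (range N)).filter (fun p => ¬ p.1 = p.2),
      (if N = (p.1+1)^2 + (p.2+1)^2 then (1:ZMod 2) else 0)) = 0 := by
    apply Finset.sum_involution (fun p _ => (p.2, p.1))
    · intro a ha
      by_cases hc : N = (a.1+1)^2 + (a.2+1)^2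
      · rw [if_pos hc, if_pos (hc.trans (Nat.add_comm _ _))]
        decide
      · rw [if_neg hc, if_neg (fun hcc => hc (hcc.trans (Nat.add_comm _ _)))]
        decide
    · intro a ha hne hcon
      have h1 : a.2 = a.1 := congrArg Prod.fst hcon
      exact (Finset.mem_filter.mp ha).2 h1.symm
    · intro a ha
      have h := Finset.mem_filter.mp ha
      refine Finset.mem_filter.mpr ⟨?_, ?_⟩
      · have := Finset.mem_product.mp h.1
        exact Finset.mem_product.mpr ⟨this.2, this.1⟩
      · exact fun hcon => h.2 hcon.symm
    · intro a ha
      rfl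
  rw [hoff, add_zero]
  have hdiag : (∑ p ∈ ((range N) ×ˢ (range N)).filter (fun p => p.1 = p.2),
      (if N = (p.1+1)^2 + (p.2+1)^2 then (1:ZMod 2) else 0))
      = ∑ i ∈ range N, (if N = 2*(i+1)^2 then (1:ZMod 2) else 0) := by
    refine Finset.sum_nbij' (fun p => p.1) (fun i => (i, i)) ?_ ?_ ?_ ?_ ?_
    · intro a ha
      exact (Finset.mem_product.mp (Finset.mem_filter.mp ha).1).1
    · intro i hi
      exact Finset.mem_filter.mpr ⟨Finset.mem_product.mpr ⟨hi, hi⟩, rfl⟩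
    · intro a ha
      have h2 := (Finset.mem_filter.mp ha).2
      exact Prod.ext rfl h2
    · intro i hi
      rfl
    · intro a ha
      have h2 : a.1 = a.2 := (Finset.mem_filter.mp ha).2
      rw [← h2, ← two_mul]
  rw [hdiag]
  by_cases h : ∃ i, i ∈ range N ∧ N = 2*(i+1)^2
  · obtain ⟨i₀, hi₀, he⟩ := h
    rw [if_pos ⟨i₀, hi₀, he⟩]
    rw [Finset.sum_eq_single i₀]
    · rw [if_pos he]
    · intro j _ hj
      rw [if_neg]
      intro hc
      refine hj (sq_unique (Nat.eq_of_mul_eq_mul_left (show 0 < 2 by norm_num) ?_))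
      rw [← hc, he]
    · intro hi
      exact absurd hi₀ hi
  · rw [if_neg h]
    apply Finset.sum_eq_zero
    intro i hi
    rw [if_neg]
    intro hc
    exact h ⟨i, hi, hc⟩

lemma h2z2 : (2 : PowerSeries (ZMod 2)) = 0 := by
  have e : (2 : PowerSeries (ZMod 2)) = PowerSeries.C (R := ZMod 2) (2 : ZMod 2) :=
    (map_ofNat (PowerSeries.C (R := ZMod 2)) 2).symm
  rw [e, show (2 : ZMod 2) = 0 from by decide, map_zero]

lemma sq2 (x : PowerSeries (ZMod 2)) : (1-x)^2 = 1 - x^2 := by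
  linear_combination (x^2 - x) * h2z2

lemma add2sub (u : PowerSeries (ZMod 2)) : 1 + u = 1 - u := by
  linear_combination u * h2z2

lemma rhs_parity (n : ℕ) :
    ((PowerSeries.coeff (R := ℤ) n
        ((X:PowerSeries ℤ) * (∏ k ∈ Finset.Icc 1 n, (1 - (X:PowerSeries ℤ)^(5*k)))^6) : ℤ) : ZMod 2)
      = (if ∃ k, k ∈ range n ∧ n = 5*(k*(k+1)) + 1 then 1 else 0) := by
  classical
  match n with
  | 0 =>
    rw [show ∀ g : PowerSeries ℤ, PowerSeries.coeff (R := ℤ) 0 ((X:PowerSeries ℤ) * g) = 0 from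
      fun g => by rw [PowerSeries.coeff_zero_eq_constantCoeff, map_mul,
        PowerSeries.constantCoeff_X, zero_mul]]
    simp
  | (m+1) =>
    rw [PowerSeries.coeff_succ_X_mul]
    set n := m + 1 with hn
    have hn1 : 1 ≤ n := by omega
    set ψ := PowerSeries.map (Int.castRingHom (ZMod 2)) with hψ
    set S2 := PowerSeries (ZMod 2)
    set P2 := ∏ k ∈ range n, (1 - (X:S2)^(10*k+10)) with hP2
    set W2 := ∏ i ∈ range (2*n), (1 - (X:S2)^(10*(i+1))) with hW2
    set Q2 := ∏ k ∈ range (n-1), (1 - (X:S2)^(10*k+10)) with hQ2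
    set Ps2 := ∑ i ∈ range n, (X:S2)^(5*(i*(i+1))) with hPs2
    set QQ := ∏ k ∈ Finset.Icc 1 n, (1 - (X:S2)^(10*k)) with hQQ
    have hcm : ((PowerSeries.coeff (R := ℤ) m ((∏ k ∈ Finset.Icc 1 n, (1 - (X:PowerSeries ℤ)^(5*k)))^6) : ℤ) : ZMod 2)
        = PowerSeries.coeff (R := ZMod 2) m (ψ ((∏ k ∈ Finset.Icc 1 n, (1 - (X:PowerSeries ℤ)^(5*k)))^6)) := by
      rw [hψ, PowerSeries.coeff_map]
      rfl
    rw [hcm]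
    -- the map of the product is QQ^3
    have hmap6 : ψ ((∏ k ∈ Finset.Icc 1 n, (1 - (X:PowerSeries ℤ)^(5*k)))^6) = QQ^3 := by
      rw [map_pow, map_prod]
      have e1 : ∀ k ∈ Finset.Icc 1 n, ψ (1 - (X:PowerSeries ℤ)^(5*k)) = 1 - (X:S2)^(5*k) :=
        fun k _ => by rw [hψ, map_sub, map_one, map_pow, PowerSeries.map_X]
      rw [Finset.prod_congr rfl e1, ← Finset.prod_pow]
      have e2 : ∀ k ∈ Finset.Icc 1 n, (1 - (X:S2)^(5*k))^6 = (1 - (X:S2)^(10*k))^3 := by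
        intro k _
        rw [show (6:ℕ) = 2*3 from rfl, pow_mul, sq2, ← pow_mul, show 5*k*2 = 10*k from by omega]
      rw [Finset.prod_congr rfl e2, Finset.prod_pow, hQQ]
    rw [hmap6]
    -- Gauss 2 mapped
    have hdvd : (X:S2)^(10*n) ∣ (P2 * Q2 * W2 - Ps2) := by
      have hg := gauss2 n hn1
      have hmg := map_dvd ψ hg
      rw [map_sub, map_mul, map_mul, map_prod, map_prod, map_prod, map_sum] at hmg
      have c1 : ∀ k ∈ range n, ψ (1 + ((X:PowerSeries ℤ)^5)^(2*k+2)) = 1 - (X:S2)^(10*k+10) :=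
        fun k _ => by
          rw [hψ, map_add, map_one, map_pow, map_pow, PowerSeries.map_X, ← pow_mul,
            show 5*(2*k+2) = 10*k+10 from by omega, add2sub]
      have c2 : ∀ k ∈ range (n-1), ψ (1 + ((X:PowerSeries ℤ)^5)^(2*k+2)) = 1 - (X:S2)^(10*k+10) :=
        fun k _ => by
          rw [hψ, map_add, map_one, map_pow, map_pow, PowerSeries.map_X, ← pow_mul,
            show 5*(2*k+2) = 10*k+10 from by omega, add2sub]
      have c3 : ∀ i ∈ range (2*n), ψ (1 - (((X:PowerSeries ℤ)^5)^2)^(i+1)) = 1 - (X:S2)^(10*(i+1)) :=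
        fun i _ => by
          rw [hψ, map_sub, map_one, map_pow, map_pow, map_pow, PowerSeries.map_X, ← pow_mul,
            ← pow_mul, show 5*(2*(i+1)) = 10*(i+1) from by omega]
      have c4 : ∀ i ∈ range n, ψ (((X:PowerSeries ℤ)^5)^(i*(i+1))) = (X:S2)^(5*(i*(i+1))) :=
        fun i _ => by
          rw [hψ, map_pow, map_pow, PowerSeries.map_X, ← pow_mul]
      rw [map_pow, map_pow, PowerSeries.map_X] at hmg
      rw [Finset.prod_congr rfl c1, Finset.prod_congr rfl c2, Finset.prod_congr rfl c3,
        Finset.sum_congr rfl c4] at hmg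
      rw [← pow_mul, show 5*(2*n) = 10*n from by omega] at hmg
      exact hmg
    -- trims
    have hQP : QQ = P2 := by
      rw [hQQ, prodIcc1 (fun k => (1 - (X:S2)^(10*k))) n, hP2]
      exact Finset.prod_congr rfl fun i _ => by rw [show 10*(i+1) = 10*i+10 from by omega]
    have hWP : (X:S2)^n ∣ W2 - P2 := by
      rw [hW2, ← Finset.prod_range_mul_prod_Ico
        (fun i => (1 - (X:S2)^(10*(i+1)))) (by omega : n ≤ 2*n)]
      have hre : (∏ i ∈ range n, (1 - (X:S2)^(10*(i+1)))) = P2 := by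
        rw [hP2]
        exact Finset.prod_congr rfl fun i _ => by rw [show 10*(i+1) = 10*i+10 from by omega]
      rw [hre]
      have h1 : (X:S2)^n ∣ (∏ i ∈ Finset.Ico n (2*n), (1 - (X:S2)^(10*(i+1)))) - 1 := by
        apply ones_dvd
        intro i hi
        have hiN : n ≤ i := (Finset.mem_Ico.mp hi).1
        rw [show (1 - (X:S2)^(10*(i+1))) - 1 = -(X^(10*(i+1))) from by ring]
        exact (dvd_neg).mpr (pow_dvd_pow X (by omega))
      rw [show P2 * (∏ i ∈ Finset.Ico n (2*n), (1 - (X:S2)^(10*(i+1)))) - P2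
          = P2 * ((∏ i ∈ Finset.Ico n (2*n), (1 - (X:S2)^(10*(i+1)))) - 1) from by ring]
      exact h1.mul_left _
    have hPQ : (X:S2)^n ∣ P2 - Q2 := by
      rw [hP2, show n = (n-1)+1 from by omega, Finset.prod_range_succ, ← hQ2]
      rw [show Q2 * (1 - (X:S2)^(10*(n-1)+10)) - Q2 = -(Q2 * X^(10*(n-1)+10)) from by ring]
      exact (dvd_neg).mpr (Dvd.dvd.mul_left (pow_dvd_pow X (by omega)) _)
    have hstep : (X:S2)^n ∣ QQ^3 - Ps2 := by
      rw [hQP]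
      rw [show P2^3 - Ps2 = (P2*(P2*(-(W2 - P2)) + W2*(P2 - Q2))) + (P2*Q2*W2 - Ps2) from by ring]
      refine dvd_add (Dvd.dvd.mul_left (dvd_add ?_ ?_) P2)
        ((pow_dvd_pow X (by omega : n ≤ 10*n)).trans hdvd)
      · exact (hWP.neg_right).mul_left _
      · exact hPQ.mul_left _
    have hco : PowerSeries.coeff (R := ZMod 2) m (QQ^3) = PowerSeries.coeff (R := ZMod 2) m Ps2 := by
      have h0 := (PowerSeries.X_pow_dvd_iff.mp hstep) m (by omega)
      rw [map_sub] at h0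
      exact sub_eq_zero.mp h0
    rw [hco]
    have hcoP : PowerSeries.coeff (R := ZMod 2) m Ps2
        = ∑ i ∈ range n, (if m = 5*(i*(i+1)) then (1 : ZMod 2) else 0) := by
      rw [hPs2, map_sum]
      exact Finset.sum_congr rfl fun i _ => PowerSeries.coeff_X_pow m _
    rw [hcoP]
    have hiff : (∃ k, k ∈ range n ∧ n = 5*(k*(k+1)) + 1)
        ↔ (∃ k, k ∈ range n ∧ m = 5*(k*(k+1))) := by
      constructor
      · rintro ⟨k, h1, h2⟩
        rw [hn] at h2
        exact ⟨k, h1, Nat.succ_injective h2⟩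
      · rintro ⟨k, h1, h2⟩
        refine ⟨k, h1, ?_⟩
        rw [hn, h2]
    rw [if_congr hiff rfl rfl]
    by_cases h : ∃ k, k ∈ range n ∧ m = 5*(k*(k+1))
    · obtain ⟨k₀, hk₀, he⟩ := h
      rw [if_pos ⟨k₀, hk₀, he⟩, Finset.sum_eq_single k₀]
      · rw [if_pos he]
      · intro j _ hj
        rw [if_neg]
        intro hc
        refine hj (sumsq_unique (Nat.eq_of_mul_eq_mul_left (show 0 < 5 by norm_num) ?_))
        rw [← hc, he]
      · intro hk
        exact absurd hk₀ hk
    · rw [if_neg h]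
      apply Finset.sum_eq_zero
      intro k hk
      rw [if_neg]
      intro hc
      exact h ⟨k, hk, hc⟩

lemma arith_equiv (α β γ n : ℕ) :
    (∃ i, i ∈ range (8*3^(2*α)*5^(2*β+1)*7^(2*γ)*n + 2*(3^(2*α)*5^(2*β+1)*7^(2*γ))) ∧
       8*3^(2*α)*5^(2*β+1)*7^(2*γ)*n + 2*(3^(2*α)*5^(2*β+1)*7^(2*γ)) = 2*(i+1)^2)
    ↔ (∃ k, k ∈ range n ∧ n = 5*(k*(k+1)) + 1) := by
  set T := 3^α*5^β*7^γ with hT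
  have hTpos : 0 < T := by positivity
  have hM : (3:ℕ)^(2*α)*5^(2*β+1)*7^(2*γ) = 5*T^2 := by
    have e3 : (3:ℕ)^(2*α) = (3^α)^2 := by rw [← pow_mul, Nat.mul_comm]
    have e5 : (5:ℕ)^(2*β+1) = (5^β)^2*5 := by
      rw [pow_succ, ← pow_mul, Nat.mul_comm β 2]
    have e7 : (7:ℕ)^(2*γ) = (7^γ)^2 := by rw [← pow_mul, Nat.mul_comm]
    rw [e3, e5, e7, hT]
    ring
  have hNval : 8*3^(2*α)*5^(2*β+1)*7^(2*γ)*n + 2*(3^(2*α)*5^(2*β+1)*7^(2*γ))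
      = 2*(5*T^2)*(4*n+1) := by
    have : (8:ℕ)*3^(2*α)*5^(2*β+1)*7^(2*γ) = 8*(3^(2*α)*5^(2*β+1)*7^(2*γ)) := by ring
    rw [this, hM]
    ring
  rw [hNval]
  constructor
  · rintro ⟨i, _, he⟩
    have ha2 : (i+1)^2 = 5*T^2*(4*n+1) := by
      refine Nat.eq_of_mul_eq_mul_left (show 0 < 2 by norm_num) ?_
      rw [← he]; ring
    have hTa : T ∣ (i+1) := by
      refine (Nat.pow_dvd_pow_iff (two_ne_zero)).mp ⟨5*(4*n+1), ?_⟩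
      rw [ha2]; ring
    obtain ⟨b, hb⟩ := hTa
    have hb2 : b^2 = 5*(4*n+1) := by
      refine Nat.eq_of_mul_eq_mul_left (show 0 < T^2 by positivity) ?_
      rw [show T^2*b^2 = (T*b)^2 from by ring, ← hb, ha2]
      ring
    have h5b : 5 ∣ b := (Nat.Prime.dvd_of_dvd_pow (by norm_num)) ⟨4*n+1, hb2⟩
    obtain ⟨c, hc⟩ := h5b
    have hc2 : 5*c^2 = 4*n+1 := by
      refine Nat.eq_of_mul_eq_mul_left (show 0 < 5 by norm_num) ?_
      rw [← hb2, hc]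
      ring
    rcases Nat.even_or_odd c with ⟨u, hu⟩ | ⟨u, hu⟩
    · exfalso
      have e : 5*c^2 = 20*(u*u) := by rw [hu]; ring
      generalize u*u = U at e
      omega
    · have e : 5*c^2 = 20*(u*u)+20*u+5 := by rw [hu]; ring
      have e2 : 5*(u*(u+1)) = 5*(u*u)+5*u := by ring
      refine ⟨u, Finset.mem_range.mpr ?_, ?_⟩
      · generalize hU : u*u = U at e e2
        omega
      · generalize hU : u*u = U at e e2
        omega
  · rintro ⟨k, _, he⟩
    set a := 5*T*(2*k+1) with hadef
    have ha1 : 0 < a := by positivity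
    refine ⟨a - 1, ?_, ?_⟩
    · have hval : 2*(5*T^2)*(4*n+1) = 2*a^2 := by
        rw [he, hadef]; ring
      refine Finset.mem_range.mpr ?_
      have h1 : a ≤ a^2 := Nat.le_self_pow (two_ne_zero) a
      generalize a^2 = A at hval h1
      omega
    · have : a - 1 + 1 = a := by omega
      rw [this, he, hadef]
      ring

lemma N_mod4 (α β γ n : ℕ) :
    (8*3^(2*α)*5^(2*β+1)*7^(2*γ)*n + 2*(3^(2*α)*5^(2*β+1)*7^(2*γ))) % 4 = 2 := by
  have hodd : Odd ((3:ℕ)^(2*α)*5^(2*β+1)*7^(2*γ)) :=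
    (((by decide : Odd 3).pow).mul ((by decide : Odd 5).pow)).mul ((by decide : Odd 7).pow)
  obtain ⟨t, ht⟩ := hodd
  have e : (8:ℕ)*3^(2*α)*5^(2*β+1)*7^(2*γ)*n = 8*((3^(2*α)*5^(2*β+1)*7^(2*γ))*n) := by ring
  rw [e, ht]
  omega

theorem final_thm (α β γ : ℕ) (n : ℕ) :
    pbar 5 (8 * 3 ^ (2 * α) * 5 ^ (2 * β + 1) * 7 ^ (2 * γ) * n
        + 2 * 3 ^ (2 * α) * 5 ^ (2 * β + 1) * 7 ^ (2 * γ))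
      ≡ 4 * PowerSeries.coeff (R := ℤ) n ((X:PowerSeries ℤ)
          * (∏ k ∈ Finset.Icc 1 n, (1 - (X:PowerSeries ℤ)^(5*k)))^6) [ZMOD 8] := by
  have hNe : 8 * 3 ^ (2 * α) * 5 ^ (2 * β + 1) * 7 ^ (2 * γ) * n
        + 2 * 3 ^ (2 * α) * 5 ^ (2 * β + 1) * 7 ^ (2 * γ)
      = 8*3^(2*α)*5^(2*β+1)*7^(2*γ)*n + 2*(3^(2*α)*5^(2*β+1)*7^(2*γ)) := by ring
  rw [hNe]
  set N := 8*3^(2*α)*5^(2*β+1)*7^(2*γ)*n + 2*(3^(2*α)*5^(2*β+1)*7^(2*γ)) with hNdef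
  have hN4 : N % 4 = 2 := N_mod4 α β γ n
  have hN1 : 1 ≤ N := by omega
  set ρ := PowerSeries.coeff (R := ℤ) n ((X:PowerSeries ℤ)
      * (∏ k ∈ Finset.Icc 1 n, (1 - (X:PowerSeries ℤ)^(5*k)))^6) with hρ
  set σ2 := ∑ i ∈ range N, ∑ j ∈ range N, ((-1:ℤ)^(i+1) * (-1:ℤ)^(j+1))
      * (if N = (i+1)^2 + (j+1)^2 then 1 else 0) with hσ2
  -- σ2 ≡ ρ mod 2
  have hmod2 : σ2 ≡ ρ [ZMOD 2] := by
    have hcast2 : ((σ2 : ℤ) : ZMod 2) = ((ρ : ℤ) : ZMod 2) := by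
      rw [hσ2, sig2_parity N, hρ, rhs_parity n]
      exact if_congr (arith_equiv α β γ n) rfl rfl
    exact_mod_cast (ZMod.intCast_eq_intCast_iff _ _ 2).mp hcast2
  -- conclude mod 8
  have hmod8 : -2 * (∑ i ∈ range N, (-1:ℤ)^(i+1) * (if N = (i+1)^2 then 1 else 0)) + 4 * σ2
      ≡ 4 * ρ [ZMOD 8] := by
    rw [sig1_zero N hN4, mul_zero, zero_add]
    have h := hmod2.mul_left' (c := 4)
    have e : (4:ℤ)*2 = 8 := by norm_num
    rw [e] at h
    exact h
  have hcast : ((pbar 5 N : ℤ) : ZMod 8) = (((4 * ρ) : ℤ) : ZMod 8) := by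
    rw [pbar_cong N, coeffH N hN1, ← hσ2]
    exact (ZMod.intCast_eq_intCast_iff _ _ 8).mpr hmod8
  exact_mod_cast (ZMod.intCast_eq_intCast_iff _ _ 8).mp hcast

theorem pbar5_family_f5 (α β γ : ℕ) (n : ℕ) :
    pbar 5 (8 * 3 ^ (2 * α) * 5 ^ (2 * β + 1) * 7 ^ (2 * γ) * n
        + 2 * 3 ^ (2 * α) * 5 ^ (2 * β + 1) * 7 ^ (2 * γ))
      ≡ 4 * PowerSeries.coeff (R := ℤ) n (PowerSeries.X * (ftrunc 5 n) ^ 6) [ZMOD 8] :=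
  final_thm α β γ n
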